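/- Let k ≥ 2 and let ℓ and m be k-subsets with ℓ_i = m_j for some indices 1 ≤ i, j ≤ k. Let ℓ̃ and m̃ be the (k−1)-subsets obtained by deleting the i-th entry of ℓ and the j-th entry of m respectively. Then α(ℓ̃, m̃) ≤ α(ℓ,m) − 1. -/
import Mathlib


/-- `α(ℓ,m)`: the largest `p ∈ {1,…,k}` such that `ℓ i ≤ m j` for all `1 ≤ i,j ≤ k`
with `j − i = k − p`, and `0` if no such `p` exists. -/
noncomputable def kAlpha (k : ℕ) (ℓ m : Fin k → ℤ) : ℕ :=
  sSup {p : ℕ | 1 ≤ p ∧ p ≤ k ∧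
    ∀ i j : Fin k, (j.val : ℤ) - (i.val : ℤ) = (k : ℤ) - (p : ℤ) → ℓ i ≤ m j}

lemma succAbove_val' {n : ℕ} (i : Fin (n+1)) (a : Fin n) :
    (i.succAbove a).val = if a.val < i.val then a.val else a.val + 1 := by
  rcases lt_or_ge a.val i.val with hlt | hge
  · rw [if_pos hlt,
      Fin.succAbove_of_castSucc_lt _ _ (by rwa [Fin.lt_def, Fin.coe_castSucc])]
    exact Fin.coe_castSucc a
  · rw [if_neg (not_lt.2 hge),
      Fin.succAbove_of_le_castSucc _ _ (by rw [Fin.le_def, Fin.coe_castSucc]; omega)]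
    exact Fin.val_succ a

/-- Let `k = n + 1 ≥ 2` and let `ℓ`, `m` be `k`-subsets with
`ℓ i = m j`.  Deleting the `i`-th entry of `ℓ` and the `j`-th entry of `m`
(implemented via `Fin.succAbove`) yields `(k−1)`-subsets `ℓ̃ = ℓ ∘ i.succAbove`,
`m̃ = m ∘ j.succAbove`; then `α(ℓ̃,m̃) ≤ α(ℓ,m) − 1`. -/
theorem alpha_delete_le (n : ℕ) (hn : 1 ≤ n) (ℓ m : Fin (n + 1) → ℤ)
    (hℓ : StrictMono ℓ) (hm : StrictMono m) (i j : Fin (n + 1)) (h : ℓ i = m j) :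
    (kAlpha n (ℓ ∘ i.succAbove) (m ∘ j.succAbove) : ℤ) ≤ (kAlpha (n + 1) ℓ m : ℤ) - 1 := by
  set S := {p : ℕ | 1 ≤ p ∧ p ≤ n + 1 ∧
    ∀ a b : Fin (n+1), (b.val : ℤ) - (a.val : ℤ) = ((n+1 : ℕ) : ℤ) - (p : ℤ) → ℓ a ≤ m b} with hSdef
  set T := {p : ℕ | 1 ≤ p ∧ p ≤ n ∧
    ∀ a b : Fin n, (b.val : ℤ) - (a.val : ℤ) = (n : ℤ) - (p : ℤ) →
      (ℓ ∘ i.succAbove) a ≤ (m ∘ j.succAbove) b} with hTdef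
  have hSbdd : BddAbove S := ⟨n + 1, fun p hp => hp.2.1⟩
  have hTbdd : BddAbove T := ⟨n, fun p hp => hp.2.1⟩
  -- 1 ∈ S
  have h1S : 1 ∈ S := by
    refine ⟨le_refl 1, by omega, fun a b hab => ?_⟩
    have ha : a.val = 0 := by have := a.isLt; have := b.isLt; push_cast at hab; omega
    have hb : b.val = n := by have := a.isLt; have := b.isLt; push_cast at hab; omega
    calc ℓ a ≤ ℓ i := hℓ.monotone (by rw [Fin.le_def, ha]; omega)
      _ = m j := h
      _ ≤ m b := hm.monotone (by rw [Fin.le_def, hb]; have := j.isLt; omega)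
  -- step: p ∈ T → p + 1 ∈ S
  have hstep : ∀ p ∈ T, p + 1 ∈ S := by
    rintro p ⟨hp1, hpn, hpT⟩
    refine ⟨by omega, by omega, fun a b hab => ?_⟩
    push_cast at hab
    have hak := a.isLt
    have hbk := b.isLt
    rcases lt_or_ge b.val j.val with hbj | hbj
    · -- case 1: b < j : take a' = a, b' = b
      have hjk := j.isLt
      have han : a.val < n := by omega
      have hbn : b.val < n := by omega
      have key := hpT ⟨a.val, han⟩ ⟨b.val, hbn⟩ (by simp only [Fin.val_mk]; omega)
      simp only [Function.comp] at key
      have h1 : ℓ a ≤ ℓ (i.succAbove ⟨a.val, han⟩) := by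
        apply hℓ.monotone
        rw [Fin.le_def, succAbove_val' i ⟨a.val, han⟩]
        simp only [Fin.val_mk]
        split <;> omega
      have h2 : m (j.succAbove ⟨b.val, hbn⟩) ≤ m b := by
        apply hm.monotone
        rw [Fin.le_def, succAbove_val' j ⟨b.val, hbn⟩]
        simp only [Fin.val_mk]
        split <;> omega
      exact h1.trans (key.trans h2)
    · rcases lt_or_ge i.val a.val with hai | hai
      · -- case 2: b ≥ j, a > i : take a' = a - 1, b' = b - 1
        have ha1 : a.val - 1 < n := by omega
        have hb1 : b.val - 1 < n := by omega
        have key := hpT ⟨a.val - 1, ha1⟩ ⟨b.val - 1, hb1⟩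
          (by simp only [Fin.val_mk]; push_cast [Nat.cast_sub (by omega : 1 ≤ a.val),
            Nat.cast_sub (by omega : 1 ≤ b.val)]; omega)
        simp only [Function.comp] at key
        have h1 : ℓ a ≤ ℓ (i.succAbove ⟨a.val - 1, ha1⟩) := by
          apply hℓ.monotone
          rw [Fin.le_def, succAbove_val' i ⟨a.val - 1, ha1⟩]
          simp only [Fin.val_mk]
          split <;> omega
        have h2 : m (j.succAbove ⟨b.val - 1, hb1⟩) ≤ m b := by
          apply hm.monotone
          rw [Fin.le_def, succAbove_val' j ⟨b.val - 1, hb1⟩]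
          simp only [Fin.val_mk]
          split <;> omega
        exact h1.trans (key.trans h2)
      · -- case 3: b ≥ j, a ≤ i
        calc ℓ a ≤ ℓ i := hℓ.monotone (by rw [Fin.le_def]; omega)
          _ = m j := h
          _ ≤ m b := hm.monotone (by rw [Fin.le_def]; omega)
  have hS1 : 1 ≤ sSup S := le_csSup hSbdd h1S
  show ((sSup T : ℕ) : ℤ) ≤ ((sSup S : ℕ) : ℤ) - 1
  rcases Set.eq_empty_or_nonempty T with hT | hT
  · rw [hT, csSup_empty]
    simp only [Nat.bot_eq_zero, Nat.cast_zero]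
    omega
  · have hmem : sSup T ∈ T := Nat.sSup_mem hT hTbdd
    have : sSup T + 1 ≤ sSup S := le_csSup hSbdd (hstep _ hmem)
    omega
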